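/- arXiv:1711.03466 — 2 statements merged into one kernel-verified Lean document; each statement's English description precedes it below -/
import Mathlib

section
/- For α ∈ (0,1), a strategy profile s in a network creation game is a strong equilibrium if and only if s is rational and G(s) is the complete graph K_n. -/
open SimpleGraph ENNReal Finset

/-- A strategy profile: each player chooses a set of other players. -/
abbrev Profile (n : ℕ) := Fin n → Finset (Fin n)

/-- Validity: no player buys an edge to herself. -/
def Valid {n : ℕ} (s : Profile n) : Prop := ∀ i, i ∉ s i

/-- The graph formed by a strategy profile: `{i,j}` is an edge iff `j ∈ s i` or `i ∈ s j`. -/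
def NCGraph {n : ℕ} (s : Profile n) : SimpleGraph (Fin n) :=
  SimpleGraph.fromRel (fun i j => j ∈ s i)

instance {n : ℕ} (s : Profile n) : DecidableRel (NCGraph s).Adj := fun i j =>
  decidable_of_iff (i ≠ j ∧ (j ∈ s i ∨ i ∈ s j))
    (SimpleGraph.fromRel_adj (fun a b => b ∈ s a) i j).symm

/-- Distance cost of player `i`: sum of (extended) distances to all players. -/
noncomputable def dCost {n : ℕ} (s : Profile n) (i : Fin n) : ℝ≥0∞ :=
  ∑ j, ((NCGraph s).edist i j : ℝ≥0∞)

/-- Total cost of player `i` in the network creation game with parameter `α`. -/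
noncomputable def cost {n : ℕ} (α : ℝ) (s : Profile n) (i : Fin n) : ℝ≥0∞ :=
  ENNReal.ofReal α * (s i).card + dCost s i

/-- Social cost: sum of all players' costs. -/
noncomputable def socialCost {n : ℕ} (α : ℝ) (s : Profile n) : ℝ≥0∞ :=
  ∑ i, cost α s i

/-- A profile is rational if no edge is bought by both of its endpoints. -/
def Rational {n : ℕ} (s : Profile n) : Prop := ∀ i j, j ∈ s i → i ∉ s j

/-- Pure Nash equilibrium. -/
def IsNashEq {n : ℕ} (α : ℝ) (s : Profile n) : Prop :=
  ∀ (i : Fin n) (t : Finset (Fin n)), i ∉ t →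
    cost α s i ≤ cost α (Function.update s i t) i

/-- Strong equilibrium: no nonempty coalition has a joint deviation strictly
decreasing every member's cost. -/
def IsStrongEq {n : ℕ} (α : ℝ) (s : Profile n) : Prop :=
  ∀ (K : Finset (Fin n)) (s' : Profile n), K.Nonempty → Valid s' →
    (∀ i ∉ K, s' i = s i) → ∃ i ∈ K, cost α s i ≤ cost α s' i

/-- A star graph: one center adjacent to all other vertices, and no other edges. -/
def IsStar {V : Type*} (G : SimpleGraph V) : Prop :=
  ∃ c : V, ∀ i j : V, G.Adj i j ↔ i ≠ j ∧ (i = c ∨ j = c)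

/-!
A player at distance at least 2 from `d` others pays at least `n - 1 + d` for distances, while in
the complete graph it pays exactly `n - 1`. If the graph is not complete, all players with missing
edges jointly buy them (each edge by its endpoint of smaller index): each pays at most `α d` more
and saves at least `d ≥ 1`, so for `α < 1` this coalition improves. In the complete graph a doubly
bought edge can be dropped by one endpoint, saving `α`, so an equilibrium is also rational.

Conversely, let `s` be rational with complete graph and let a coalition `K` deviate to `s'`. An edge
that `K` bought in `s` is, in `s'`, either bought again by an endpoint in `K` or missing at an
endpoint in `K` (players outside `K` did not buy it, by rationality), so
`∑_K |s i| ≤ ∑_K (|s' i| + d' i)`. Strict improvement of every member would give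
`∑_K (α |s' i| + d' i) < α ∑_K |s i|`, which contradicts `α ≤ 1`.
-/

open Function

section EDist

variable {V : Type*} (G : SimpleGraph V)

lemma SimpleGraph.two_le_edist_of_not_adj {v w : V} (hvw : v ≠ w) (hadj : ¬G.Adj v w) :
    2 ≤ G.edist v w := by
  have h0 : G.edist v w ≠ 0 := fun h => hvw (edist_eq_zero_iff.mp h)
  have h1 : G.edist v w ≠ 1 := fun h => hadj (edist_eq_one_iff_adj.mp h)
  revert h0 h1
  induction G.edist v w using ENat.recTopCoe with
  | top => exact fun _ _ => le_top
  | coe m => norm_cast; omega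

variable [DecidableEq V] [DecidableRel G.Adj]

lemma SimpleGraph.indicator_add_indicator_le_edist (v w : V) :
    ((if v ≠ w then 1 else 0) + (if Gᶜ.Adj v w then 1 else 0) : ℝ≥0∞) ≤ G.edist v w := by
  by_cases hvw : v = w
  · simp [hvw]
  by_cases hadj : G.Adj v w
  · have : (1 : ℕ∞) ≤ G.edist v w :=
      Order.one_le_iff_ne_zero.mpr fun h => hvw (edist_eq_zero_iff.mp h)
    simpa [hvw, hadj] using ENat.toENNReal_le.mpr this
  · have := ENat.toENNReal_le.mpr (G.two_le_edist_of_not_adj hvw hadj)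
    simp only [compl_adj, ne_eq, hvw, not_false_eq_true, if_true, hadj, and_self]
    exact le_trans (by norm_num) this

variable [Fintype V]

lemma sum_ite_ne_eq_card_sub_one {R : Type*} [AddCommMonoidWithOne R] (v : V) :
    ∑ w, (if v ≠ w then 1 else 0 : R) = (Fintype.card V - 1 : ℕ) := by
  rw [Finset.sum_boole, Finset.filter_ne, Finset.card_erase_of_mem (Finset.mem_univ v),
    Finset.card_univ]

lemma SimpleGraph.card_sub_one_add_degree_compl_le_sum_edist (v : V) :
    ((Fintype.card V - 1 : ℕ) : ℝ≥0∞) + Gᶜ.degree v ≤ ∑ w, (G.edist v w : ℝ≥0∞) := by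
  refine le_of_eq_of_le ?_ (Finset.sum_le_sum fun w _ => G.indicator_add_indicator_le_edist v w)
  rw [Finset.sum_add_distrib, sum_ite_ne_eq_card_sub_one, Finset.sum_boole,
    ← neighborFinset_eq_filter, card_neighborFinset_eq_degree]

lemma SimpleGraph.sum_edist_top (v : V) :
    ∑ w, ((⊤ : SimpleGraph V).edist v w : ℝ≥0∞) = (Fintype.card V - 1 : ℕ) := by
  simp_rw [edist_top, ← sum_ite_ne_eq_card_sub_one v]
  refine Finset.sum_congr rfl fun w _ => ?_
  by_cases h : v = w <;> simp [h]

end EDist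

variable {n : ℕ}

lemma NCGraph_adj_iff (s : Profile n) (i j : Fin n) :
    (NCGraph s).Adj i j ↔ i ≠ j ∧ (j ∈ s i ∨ i ∈ s j) :=
  fromRel_adj _ i j

lemma NCGraph_mono {s t : Profile n} (h : ∀ i, s i ⊆ t i) : NCGraph s ≤ NCGraph t := by
  intro i j hij
  rw [NCGraph_adj_iff] at hij ⊢
  exact ⟨hij.1, hij.2.imp (fun hj => h i hj) (fun hi => h j hi)⟩

lemma add_degree_compl_le_dCost (s : Profile n) (i : Fin n) :
    ((n - 1 : ℕ) : ℝ≥0∞) + (NCGraph s)ᶜ.degree i ≤ dCost s i := by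
  simpa [dCost] using (NCGraph s).card_sub_one_add_degree_compl_le_sum_edist i

lemma dCost_of_eq_top {s : Profile n} (h : NCGraph s = ⊤) (i : Fin n) :
    dCost s i = (n - 1 : ℕ) := by
  simpa [dCost, h] using SimpleGraph.sum_edist_top i

lemma ofReal_le_cost {α : ℝ} (hα : 0 ≤ α) (s : Profile n) (i : Fin n) :
    ENNReal.ofReal (α * (s i).card + ((n - 1 : ℕ) + (NCGraph s)ᶜ.degree i)) ≤ cost α s i := by
  rw [ENNReal.ofReal_add (by positivity) (by positivity), ENNReal.ofReal_mul hα,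
    ENNReal.ofReal_add (by positivity) (by positivity)]
  simp only [ENNReal.ofReal_natCast, cost]
  gcongr
  exact add_degree_compl_le_dCost s i

lemma cost_of_eq_top {α : ℝ} (hα : 0 ≤ α) {s : Profile n} (h : NCGraph s = ⊤) (i : Fin n) :
    cost α s i = ENNReal.ofReal (α * (s i).card + (n - 1 : ℕ)) := by
  rw [ENNReal.ofReal_add (by positivity) (by positivity), ENNReal.ofReal_mul hα]
  simp [cost, dCost_of_eq_top h]

lemma le_of_cost_le_cost_of_eq_top {α : ℝ} (hα : 0 ≤ α) {s t : Profile n} (ht : NCGraph t = ⊤)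
    {i : Fin n} (h : cost α s i ≤ cost α t i) :
    α * (s i).card + (NCGraph s)ᶜ.degree i ≤ α * (t i).card := by
  have := (ofReal_le_cost hα s i).trans (h.trans_eq (cost_of_eq_top hα ht i))
  rw [ENNReal.ofReal_le_ofReal_iff (by positivity)] at this
  linarith

lemma lt_of_cost_lt_cost_of_eq_top {α : ℝ} (hα : 0 ≤ α) {s t : Profile n} (hs : NCGraph s = ⊤)
    {i : Fin n} (h : cost α t i < cost α s i) :
    α * (t i).card + (NCGraph t)ᶜ.degree i < α * (s i).card := by
  have := (ofReal_le_cost hα t i).trans_lt (h.trans_eq (cost_of_eq_top hα hs i))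
  rw [ENNReal.ofReal_lt_ofReal_iff_of_nonneg (by positivity)] at this
  linarith

lemma Valid.update {s : Profile n} (hv : Valid s) {i : Fin n} {t : Finset (Fin n)} (hi : i ∉ t) :
    Valid (update s i t) := by
  intro k
  by_cases hk : k = i
  · subst hk; simpa using hi
  · simpa [hk] using hv k

lemma NCGraph_update_erase {s : Profile n} {i j : Fin n} (hi : i ∈ s j) :
    NCGraph (update s i ((s i).erase j)) = NCGraph s := by
  refine le_antisymm (NCGraph_mono fun k => ?_) fun a b hab => ?_
  · by_cases hk : k = i
    · subst hk; simpa using Finset.erase_subset j (s k)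
    · simp [hk]
  rw [NCGraph_adj_iff] at hab ⊢
  refine ⟨hab.1, ?_⟩
  simp only [update_apply]
  grind

def completion (s : Profile n) : Profile n :=
  fun i => s i ∪ {j ∈ (NCGraph s)ᶜ.neighborFinset i | i < j}

lemma NCGraph_completion (s : Profile n) : NCGraph (completion s) = ⊤ := by
  refine eq_top_iff.mpr fun a b hab => ?_
  by_cases hadj : (NCGraph s).Adj a b
  · exact NCGraph_mono (fun i => Finset.subset_union_left) hadj
  have hc : (NCGraph s)ᶜ.Adj a b := (compl_adj _ _ _).mpr ⟨hab, hadj⟩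
  rw [NCGraph_adj_iff]
  refine ⟨hab, (lt_or_gt_of_ne hab).imp (fun hlt => ?_) (fun hlt => ?_)⟩
  · simp [completion, hc, hlt]
  · simp [completion, hc.symm, hlt]

lemma Valid.completion {s : Profile n} (hv : Valid s) : Valid (completion s) := by
  intro i
  simp [_root_.completion, hv i]

lemma card_completion_le (s : Profile n) (i : Fin n) :
    (completion s i).card ≤ (s i).card + (NCGraph s)ᶜ.degree i := by
  rw [← card_neighborFinset_eq_degree]
  exact (Finset.card_union_le _ _).trans (by gcongr; apply Finset.filter_subset)

lemma completion_of_degree_eq_zero {s : Profile n} {i : Fin n}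
    (h : (NCGraph s)ᶜ.degree i = 0) : completion s i = s i := by
  rw [← card_neighborFinset_eq_degree, Finset.card_eq_zero] at h
  simp [completion, h]

section Counting

variable {s s' : Profile n} {K : Finset (Fin n)}

lemma bought_or_compl_adj (hoff : ∀ i ∉ K, s' i = s i) {i j : Fin n} (hne : i ≠ j)
    (h : j ∈ s i ∨ i ∈ s j) :
    (j ∈ s' i ∨ i ∈ s' j) ∨ (i ∈ K ∧ (NCGraph s')ᶜ.Adj i j) ∨ (j ∈ K ∧ (NCGraph s')ᶜ.Adj j i) := by
  by_cases hadj : (NCGraph s').Adj i j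
  · exact Or.inl ((NCGraph_adj_iff s' i j).mp hadj).2
  have hc : (NCGraph s')ᶜ.Adj i j := (compl_adj _ _ _).mpr ⟨hne, hadj⟩
  by_cases hi : i ∈ K
  · exact Or.inr (Or.inl ⟨hi, hc⟩)
  by_cases hj : j ∈ K
  · exact Or.inr (Or.inr ⟨hj, hc.symm⟩)
  rw [hoff i hi, hoff j hj]
  exact Or.inl h

lemma sum_sum_ite_mem (t : Profile n) :
    ∑ i, ∑ j, (if j ∈ t i then 1 else 0) = ∑ i, (t i).card := by
  simp

lemma sum_sum_ite_compl_adj (t : Profile n) (K : Finset (Fin n)) :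
    ∑ i, ∑ j, (if i ∈ K ∧ (NCGraph t)ᶜ.Adj i j then 1 else 0) = ∑ i ∈ K, (NCGraph t)ᶜ.degree i := by
  simp only [ite_and, Finset.sum_ite_irrel, Finset.sum_const_zero, Finset.sum_ite_mem,
    Finset.univ_inter, Finset.sum_boole, ← neighborFinset_eq_filter, card_neighborFinset_eq_degree,
    Nat.cast_id]

lemma sum_card_le_of_rational (hr : Rational s) (hoff : ∀ i ∉ K, s' i = s i) :
    ∑ i ∈ K, (s i).card ≤ ∑ i ∈ K, ((s' i).card + (NCGraph s')ᶜ.degree i) := by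
  have pair : ∀ i j,
      (if j ∈ s i then 1 else 0) + (if i ∈ s j then 1 else 0) ≤
        (if j ∈ s' i then 1 else 0) + (if i ∈ s' j then 1 else 0) +
        ((if i ∈ K ∧ (NCGraph s')ᶜ.Adj i j then 1 else 0) +
          (if j ∈ K ∧ (NCGraph s')ᶜ.Adj j i then 1 else 0)) := by
    intro i j
    have hboth : ¬(j ∈ s i ∧ i ∈ s j) := fun h => hr i j h.1 h.2
    have key := fun hij : j ∈ s i ∨ i ∈ s j =>
      bought_or_compl_adj hoff (by rintro rfl; simp only [or_self] at hij; exact hr i i hij hij) hij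
    split_ifs <;> first | omega | tauto
  have hsum := Finset.sum_le_sum fun i (_ : i ∈ Finset.univ) =>
    Finset.sum_le_sum fun j (_ : j ∈ Finset.univ) => pair i j
  simp only [Finset.sum_add_distrib] at hsum
  rw [Finset.sum_comm (f := fun i j => if i ∈ s j then 1 else 0),
    Finset.sum_comm (f := fun i j => if i ∈ s' j then 1 else 0),
    Finset.sum_comm (f := fun i j => if j ∈ K ∧ (NCGraph s')ᶜ.Adj j i then 1 else 0),
    sum_sum_ite_mem, sum_sum_ite_mem, sum_sum_ite_compl_adj] at hsum
  have hout : ∑ i ∈ Finset.univ \ K, (s' i).card = ∑ i ∈ Finset.univ \ K, (s i).card :=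
    Finset.sum_congr rfl fun i hi => by rw [hoff i (Finset.mem_sdiff.mp hi).2]
  rw [← Finset.sum_sdiff (Finset.subset_univ K) (f := fun i => (s i).card),
    ← Finset.sum_sdiff (Finset.subset_univ K) (f := fun i => (s' i).card), hout] at hsum
  rw [Finset.sum_add_distrib]
  omega

end Counting

variable {α : ℝ} {s : Profile n}

lemma eq_top_of_isStrongEq (hα0 : 0 ≤ α) (hα1 : α < 1) (hv : Valid s) (hs : IsStrongEq α s) :
    NCGraph s = ⊤ := by
  by_contra hne
  obtain ⟨i₀, j₀, hadj₀⟩ := ne_bot_iff_exists_adj.mp (compl_eq_bot.not.mpr hne)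
  let K : Finset (Fin n) := {i | (NCGraph s)ᶜ.degree i ≠ 0}
  have hK : K.Nonempty :=
    ⟨i₀, by simpa [K] using ((degree_pos_iff_exists_adj _ _).mpr ⟨j₀, hadj₀⟩).ne'⟩
  obtain ⟨i, hi, hle⟩ := hs K (completion s) hK hv.completion
    fun i hi => completion_of_degree_eq_zero (by simpa [K] using hi)
  have hd : (1 : ℝ) ≤ (NCGraph s)ᶜ.degree i := by
    exact_mod_cast Nat.one_le_iff_ne_zero.mpr (by simpa [K] using hi)
  have hcard : ((completion s i).card : ℝ) ≤ (s i).card + (NCGraph s)ᶜ.degree i := by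
    exact_mod_cast card_completion_le s i
  have := le_of_cost_le_cost_of_eq_top hα0 (NCGraph_completion s) hle
  nlinarith

lemma rational_of_isStrongEq (hα : 0 < α) (hv : Valid s) (hs : IsStrongEq α s)
    (hc : NCGraph s = ⊤) : Rational s := by
  intro i j hj hi
  let t := update s i ((s i).erase j)
  obtain ⟨k, hk, hle⟩ := hs {i} t ⟨i, Finset.mem_singleton_self i⟩
    (hv.update fun h => hv i (Finset.mem_of_mem_erase h))
    fun k hk => update_of_ne (Finset.notMem_singleton.mp hk) _ _
  rw [Finset.mem_singleton] at hk
  subst hk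
  have := le_of_cost_le_cost_of_eq_top hα.le ((NCGraph_update_erase hi).trans hc) hle
  have hcard : ((t k).card : ℝ) + 1 = (s k).card := by
    exact_mod_cast (by simpa [t] using Finset.card_erase_add_one hj)
  nlinarith

lemma isStrongEq_of_rational (hα0 : 0 ≤ α) (hα1 : α ≤ 1) (hr : Rational s)
    (hc : NCGraph s = ⊤) : IsStrongEq α s := by
  intro K s' hK _ hoff
  by_contra! h
  have hlt : ∑ i ∈ K, (α * (s' i).card + (NCGraph s')ᶜ.degree i) < ∑ i ∈ K, α * (s i).card :=
    Finset.sum_lt_sum_of_nonempty hK fun i hi => lt_of_cost_lt_cost_of_eq_top hα0 hc (h i hi)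
  have hcount :
      ∑ i ∈ K, ((s i).card : ℝ) ≤ ∑ i ∈ K, ((s' i).card + (NCGraph s')ᶜ.degree i : ℝ) := by
    exact_mod_cast sum_card_le_of_rational hr hoff
  have hle : α * ∑ i ∈ K, ((s' i).card + (NCGraph s')ᶜ.degree i : ℝ) ≤
      ∑ i ∈ K, (α * (s' i).card + (NCGraph s')ᶜ.degree i) := by
    rw [Finset.mul_sum]
    gcongr with i
    nlinarith [(Nat.cast_nonneg _ : (0 : ℝ) ≤ (NCGraph s')ᶜ.degree i)]
  rw [← Finset.mul_sum] at hlt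
  linarith [mul_le_mul_of_nonneg_left hcount hα0]

theorem stmt8_general {n : ℕ} (α : ℝ) (hα0 : 0 < α) (hα : α < 1)
    (s : Profile n) (hv : Valid s) :
    IsStrongEq α s ↔ Rational s ∧ NCGraph s = ⊤ := by
  refine ⟨fun hs => ?_, fun ⟨hr, hc⟩ => isStrongEq_of_rational hα0.le hα.le hr hc⟩
  have hc := eq_top_of_isStrongEq hα0.le hα hv hs
  exact ⟨rational_of_isStrongEq hα0 hv hs hc, hc⟩

/-- For `α ∈ (0,1)`, a profile is a strong equilibrium iff it is rational and
forms the complete graph. -/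
theorem stmt8 {n : ℕ} (hn : 3 ≤ n) (α : ℝ) (hα0 : 0 < α) (hα : α < 1)
    (s : Profile n) (hv : Valid s) :
    IsStrongEq α s ↔ Rational s ∧ NCGraph s = ⊤ :=
  stmt8_general α hα0 hα s hv
end

section
/- In a network creation game with α ∈ (1,2) and n ≥ 5, no strong equilibrium exists. -/
open SimpleGraph ENNReal Finset

/-!
In a strong equilibrium the graph is connected, since a lone player could otherwise buy edges
to everybody, and for `α < 2` it has diameter at most 2, since two players at distance at least 3
would both gain by jointly buying their edge. More importantly, for `α < 2` its complement is a
forest: along a cycle of non-edges of length at least 3, every player buying the edge to her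
successor pays `α < 2` and gains two new neighbours. For `n ≥ 5` a 2-colouring of this forest
has a colour class with three vertices, that is, a triangle of the graph.

For `α > 1` there is no triangle. Every triangle contains a path `a → b → c` of purchases
(`a` buys `ab`, `b` buys `bc`). Dropping an edge that lies on a triangle saves `α > 1` and,
by the diameter bound, costs at most 1, unless some vertex sees the dropped neighbour as its
only common neighbour with the buyer. This gives `x` with `b` the only common neighbour of `a`
and `x`, and `y` with `c` the only common neighbour of `b` and `y`. Then `a`, `x`, `y` are
pairwise non-adjacent, which is a cycle of non-edges.
-/
open Function

namespace SimpleGraph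

variable {V : Type*} {G : SimpleGraph V} {u v w x y : V}

lemma adj_deleteEdges_of_ne (h : G.Adj x y) (hu : x ≠ u) (hv : x ≠ v) :
    (G.deleteEdges {s(u, v)}).Adj x y := by
  rw [deleteEdges_adj, Set.mem_singleton_iff, Sym2.eq_iff]
  tauto

lemma two_le_edist_of_not_adj_s9 (hne : u ≠ v) (hna : ¬G.Adj u v) : 2 ≤ G.edist u v := by
  have h : 1 < G.edist u v := by
    rw [← not_le, edist_le_one_iff_adj_or_eq]
    tauto
  exact Order.add_one_le_of_lt h

lemma edist_le_two_of_adj_of_adj (huw : G.Adj u w) (hwv : G.Adj w v) : G.edist u v ≤ 2 := by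
  simpa using (Walk.cons huw (Walk.cons hwv .nil)).edist_le

lemma edist_deleteEdges_le (hxv : x ≠ v) (hx : G.edist u x ≤ 2)
    (hz : u ≠ x → ¬G.Adj u x → ∃ z, G.Adj u z ∧ G.Adj z x ∧ z ≠ v) :
    (G.deleteEdges {s(u, v)}).edist u x ≤ G.edist u x := by
  by_cases hux : u = x
  · simp [hux]
  by_cases hadj : G.Adj u x
  · rw [edist_eq_one_iff_adj.2 hadj, edist_eq_one_iff_adj.2
      (adj_deleteEdges_of_ne hadj.symm (Ne.symm hux) hxv).symm]
  obtain ⟨z, huz, hzx, hzv⟩ := hz hux hadj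
  rw [le_antisymm hx (two_le_edist_of_not_adj_s9 hux hadj)]
  exact edist_le_two_of_adj_of_adj (adj_deleteEdges_of_ne huz.symm huz.ne.symm hzv).symm
    (adj_deleteEdges_of_ne hzx huz.ne.symm hzv)

lemma not_cliqueFree_of_colorable_compl [Fintype V] {k m : ℕ} (hc : Gᶜ.Colorable k)
    (hV : k * m < Fintype.card V) : ¬G.CliqueFree (m + 1) := by
  classical
  obtain ⟨C⟩ := hc
  obtain ⟨c, hc⟩ := Fintype.exists_lt_card_fiber_of_mul_lt_card C (by simpa using hV)
  obtain ⟨t, hts, ht⟩ := Finset.exists_subset_card_eq (Nat.succ_le_of_lt hc)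
  refine fun hfree => hfree t ⟨fun x hx y hy hxy => ?_, ht⟩
  by_contra hna
  have hCx := (Finset.mem_filter.1 (hts hx)).2
  have hCy := (Finset.mem_filter.1 (hts hy)).2
  exact C.valid ((compl_adj G x y).2 ⟨hxy, hna⟩) (hCx.trans hCy.symm)

end SimpleGraph

variable {n : ℕ} {α : ℝ} {s s' : Profile n}

lemma ncGraph_adj {i j : Fin n} : (NCGraph s).Adj i j ↔ i ≠ j ∧ (j ∈ s i ∨ i ∈ s j) :=
  fromRel_adj _ i j

lemma ncGraph_adj_of_mem (hv : Valid s) {i j : Fin n} (h : j ∈ s i) : (NCGraph s).Adj i j :=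
  ncGraph_adj.2 ⟨fun hij => hv i (hij ▸ h), .inl h⟩

lemma ncGraph_mono (h : ∀ i, s i ⊆ s' i) : NCGraph s ≤ NCGraph s' := by
  intro i j hij
  rw [ncGraph_adj] at hij ⊢
  exact ⟨hij.1, hij.2.imp (@h i j) (@h j i)⟩

lemma deleteEdges_le_ncGraph_update_erase (s : Profile n) (u v : Fin n) :
    (NCGraph s).deleteEdges {s(u, v)} ≤ NCGraph (update s u ((s u).erase v)) := by
  intro a b hab
  rw [deleteEdges_adj, Set.mem_singleton_iff, Sym2.eq_iff, ncGraph_adj] at hab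
  rw [ncGraph_adj]
  refine ⟨hab.1.1, ?_⟩
  by_cases ha : a = u <;> by_cases hb : b = u <;> simp_all

lemma dCost_add_le_dCost_add {i : Fin n} (T : Finset (Fin n)) {c d : ℝ≥0∞}
    (hout : ∀ j ∉ T, (NCGraph s').edist i j ≤ (NCGraph s).edist i j)
    (hT : ∑ j ∈ T, ((NCGraph s').edist i j : ℝ≥0∞) + c ≤
      ∑ j ∈ T, ((NCGraph s).edist i j : ℝ≥0∞) + d) :
    dCost s' i + c ≤ dCost s i + d := by
  rw [dCost, dCost, ← sum_add_sum_compl T, ← sum_add_sum_compl T, add_right_comm,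
    add_right_comm _ _ d]
  exact add_le_add hT (sum_le_sum fun j hj => ENat.toENNReal_le.2 (hout j (mem_compl.1 hj)))

lemma cost_ne_top {i : Fin n} (h : dCost s i ≠ ⊤) : cost α s i ≠ ⊤ :=
  add_ne_top.2 ⟨mul_ne_top ofReal_ne_top (natCast_ne_top _), h⟩

lemma cost_lt_of_insert {i w : Fin n} (hα : α < 2) (hs' : s' i = insert w (s i))
    (hd : dCost s' i + 2 ≤ dCost s i) (hfin : dCost s i ≠ ⊤) : cost α s' i < cost α s i := by
  have hcard : ((s' i).card : ℝ≥0∞) ≤ (s i).card + 1 := by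
    rw [hs']
    exact_mod_cast card_insert_le w (s i)
  refine lt_of_add_lt_add_right (a := 2) ?_
  calc cost α s' i + 2 = ENNReal.ofReal α * (s' i).card + (dCost s' i + 2) := by
        rw [cost, add_assoc]
    _ ≤ ENNReal.ofReal α * ((s i).card + 1) + dCost s i := by gcongr
    _ = cost α s i + ENNReal.ofReal α := by rw [cost]; ring
    _ < cost α s i + 2 := ENNReal.add_lt_add_left (cost_ne_top hfin) (ofReal_lt_ofNat.2 hα)

lemma cost_lt_of_erase {i w : Fin n} (hα : 1 < α) (hw : w ∈ s i) (hs' : s' i = (s i).erase w)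
    (hd : dCost s' i ≤ dCost s i + 1) (hfin : dCost s i ≠ ⊤) : cost α s' i < cost α s i := by
  have hcard : ((s' i).card : ℝ≥0∞) + 1 = (s i).card := by
    rw [hs']
    exact_mod_cast card_erase_add_one hw
  refine lt_of_add_lt_add_right (a := ENNReal.ofReal α) ?_
  calc cost α s' i + ENNReal.ofReal α
        = ENNReal.ofReal α * ((s' i).card + 1) + dCost s' i := by rw [cost]; ring
    _ ≤ ENNReal.ofReal α * (s i).card + (dCost s i + 1) := by rw [hcard]; gcongr
    _ = cost α s i + 1 := by rw [cost]; ring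
    _ < cost α s i + ENNReal.ofReal α :=
        ENNReal.add_lt_add_left (cost_ne_top hfin) (by simpa using hα)

lemma cost_lt_of_insert_of_two_lt_edist {u w : Fin n} (hα : α < 2) (hle : NCGraph s ≤ NCGraph s')
    (hs' : s' u = insert w (s u)) (hw : 2 < (NCGraph s).edist u w) (hfin : dCost s u ≠ ⊤) :
    cost α s' u < cost α s u := by
  refine cost_lt_of_insert hα hs' ?_ hfin
  have hadj : (NCGraph s').Adj u w :=
    ncGraph_adj.2 ⟨(two_lt_edist_iff.1 hw).1, .inl (hs' ▸ mem_insert_self w _)⟩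
  have h1 : (NCGraph s').edist u w ≤ 1 := (edist_eq_one_iff_adj.2 hadj).le
  have h3 : 3 ≤ (NCGraph s).edist u w := Order.add_one_le_of_lt hw
  simpa using dCost_add_le_dCost_add {w} (fun j _ => edist_anti hle) (c := 2) (d := 0) <| by
    simp only [sum_singleton, add_zero]
    calc ((NCGraph s').edist u w : ℝ≥0∞) + 2 ≤ 1 + 2 := by gcongr; exact_mod_cast h1
      _ = 3 := by norm_num
      _ ≤ _ := by exact_mod_cast h3

lemma cost_lt_of_insert_of_adj_of_adj {u w a b : Fin n} (hα : α < 2)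
    (hle : NCGraph s ≤ NCGraph s') (hs' : s' u = insert w (s u)) (hab : a ≠ b)
    (ha : (NCGraph s').Adj u a) (hb : (NCGraph s').Adj u b)
    (ha' : ¬(NCGraph s).Adj u a) (hb' : ¬(NCGraph s).Adj u b) (hfin : dCost s u ≠ ⊤) :
    cost α s' u < cost α s u := by
  refine cost_lt_of_insert hα hs' ?_ hfin
  have ha1 : ((NCGraph s').edist u a : ℝ≥0∞) ≤ 1 := by
    exact_mod_cast (edist_eq_one_iff_adj.2 ha).le
  have hb1 : ((NCGraph s').edist u b : ℝ≥0∞) ≤ 1 := by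
    exact_mod_cast (edist_eq_one_iff_adj.2 hb).le
  have ha2 : 2 ≤ ((NCGraph s).edist u a : ℝ≥0∞) := by
    exact_mod_cast two_le_edist_of_not_adj_s9 ha.ne ha'
  have hb2 : 2 ≤ ((NCGraph s).edist u b : ℝ≥0∞) := by
    exact_mod_cast two_le_edist_of_not_adj_s9 hb.ne hb'
  simpa using dCost_add_le_dCost_add {a, b} (fun j _ => edist_anti hle) (c := 2) (d := 0) <| by
    simp only [sum_pair hab, add_zero]
    calc ((NCGraph s').edist u a : ℝ≥0∞) + (NCGraph s').edist u b + 2 ≤ 1 + 1 + 2 := by gcongr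
      _ = 2 + 2 := by norm_num
      _ ≤ _ := by gcongr

def addPurchases (s : Profile n) (K : Finset (Fin n)) (p : Fin n → Fin n) : Profile n :=
  fun k => if k ∈ K then insert (p k) (s k) else s k

section addPurchases

variable {K : Finset (Fin n)} {p : Fin n → Fin n}

lemma addPurchases_of_mem {k : Fin n} (hk : k ∈ K) :
    addPurchases s K p k = insert (p k) (s k) :=
  if_pos hk

lemma subset_addPurchases (k : Fin n) : s k ⊆ addPurchases s K p k := by
  unfold addPurchases
  split_ifs
  exacts [subset_insert _ _, subset_rfl]

lemma valid_addPurchases (hv : Valid s) (hp : ∀ k ∈ K, p k ≠ k) : Valid (addPurchases s K p) := by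
  intro k
  unfold addPurchases
  split_ifs with hk
  exacts [by simpa [(hp k hk).symm] using hv k, hv k]

end addPurchases

namespace IsNashEq

lemma dCost_ne_top (hN : IsNashEq α s) (i : Fin n) : dCost s i ≠ ⊤ := by
  set s' := update s i (univ.erase i)
  have hs' : dCost s' i ≠ ⊤ := by
    refine ENNReal.sum_ne_top.2 fun j _ => ne_top_of_le_ne_top one_ne_top ?_
    have : (NCGraph s').edist i j ≤ 1 := by
      rw [edist_le_one_iff_adj_or_eq, ncGraph_adj]
      by_cases hij : i = j
      · exact .inr hij
      · exact .inl ⟨hij, .inl (by simp [s', Ne.symm hij])⟩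
    exact_mod_cast this
  have hle := hN i (univ.erase i) (notMem_erase i univ)
  exact (add_ne_top.1 (ne_top_of_le_ne_top (cost_ne_top hs') hle)).2

lemma exists_sole_common_neighbor (hN : IsNashEq α s) (hv : Valid s) (hα : 1 < α)
    (hdiam : ∀ i j, (NCGraph s).edist i j ≤ 2) {u v w : Fin n} (huv : v ∈ s u)
    (huw : (NCGraph s).Adj u w) (hwv : (NCGraph s).Adj w v) :
    ∃ x, ¬(NCGraph s).Adj u x ∧ (NCGraph s).Adj v x ∧
      ∀ z, (NCGraph s).Adj u z → (NCGraph s).Adj z x → z = v := by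
  by_contra! hno
  set G := NCGraph s
  set H := G.deleteEdges {s(u, v)}
  set s' := update s u ((s u).erase v)
  have hvu : v ≠ u := (ncGraph_adj_of_mem hv huv).ne.symm
  have hHle : H ≤ NCGraph s' := deleteEdges_le_ncGraph_update_erase s u v
  have hHuw : H.Adj u w := (adj_deleteEdges_of_ne huw.symm huw.ne.symm hwv.ne).symm
  have hHwv : H.Adj w v := adj_deleteEdges_of_ne hwv huw.ne.symm hwv.ne
  have hfar : ∀ x, x ≠ v → H.edist u x ≤ G.edist u x := by
    refine fun x hxv => edist_deleteEdges_le hxv (hdiam u x) fun hux hadj => ?_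
    by_cases hvx : G.Adj v x
    · exact hno x hadj hvx
    obtain ⟨z, hz⟩ := (edist_eq_two_iff.1 <|
      le_antisymm (hdiam u x) (two_le_edist_of_not_adj_s9 hux hadj)).2.2
    rw [mem_commonNeighbors] at hz
    exact ⟨z, hz.1, hz.2.symm, G.ne_of_adj_of_not_adj hz.2.symm hvx⟩
  have hd : dCost s' u ≤ dCost s u + 1 := by
    simpa using dCost_add_le_dCost_add {v} (c := 0) (d := 1)
      (fun x hx => (edist_anti hHle).trans (hfar x (notMem_singleton.1 hx))) <| by
      simp only [sum_singleton, add_zero]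
      calc ((NCGraph s').edist u v : ℝ≥0∞) ≤ 2 := by
            exact_mod_cast (edist_anti hHle).trans (edist_le_two_of_adj_of_adj hHuw hHwv)
        _ = 1 + 1 := by norm_num
        _ ≤ _ := by
            gcongr
            exact_mod_cast Order.one_le_iff_pos.2 (edist_pos_of_ne hvu.symm)
  exact (hN u _ fun h => hv u (mem_of_mem_erase h)).not_gt
    (cost_lt_of_erase hα huv (update_self ..) hd (hN.dCost_ne_top u))

end IsNashEq

namespace IsStrongEq

lemma isNashEq (hse : IsStrongEq α s) (hv : Valid s) : IsNashEq α s := by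
  intro i t hi
  have hvalid : Valid (update s i t) := by
    intro k
    by_cases hk : k = i
    · subst hk
      simpa using hi
    · simpa [hk] using hv k
  obtain ⟨j, hj, hle⟩ := hse {i} _ (singleton_nonempty i) hvalid
    fun k hk => update_of_ne (notMem_singleton.1 hk) _ _
  rwa [mem_singleton.1 hj] at hle

lemma exists_cost_le_addPurchases (hse : IsStrongEq α s) (hv : Valid s) {K : Finset (Fin n)}
    {p : Fin n → Fin n} (hK : K.Nonempty) (hp : ∀ k ∈ K, p k ≠ k) :
    ∃ k ∈ K, cost α s k ≤ cost α (addPurchases s K p) k :=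
  hse K _ hK (valid_addPurchases hv hp) fun _ hk => if_neg hk

lemma edist_le_two (hse : IsStrongEq α s) (hv : Valid s) (hα : α < 2) (i j : Fin n) :
    (NCGraph s).edist i j ≤ 2 := by
  by_contra! hij
  have hne : i ≠ j := (two_lt_edist_iff.1 hij).1
  have hfin := (hse.isNashEq hv).dCost_ne_top
  set p : Fin n → Fin n := fun k => if k = i then j else i
  obtain ⟨k, hk, hle⟩ := hse.exists_cost_le_addPurchases hv (K := {i, j}) (p := p)
    (insert_nonempty _ _) (by simp [p, hne, Ne.symm hne])
  have hmono := ncGraph_mono (subset_addPurchases (s := s) (K := {i, j}) (p := p))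
  obtain rfl | rfl : k = i ∨ k = j := by simpa using hk
  · refine hle.not_gt (cost_lt_of_insert_of_two_lt_edist hα hmono ?_ hij (hfin k))
    simpa [p] using addPurchases_of_mem (s := s) (p := p) hk
  · refine hle.not_gt (cost_lt_of_insert_of_two_lt_edist hα hmono ?_
      (SimpleGraph.edist_comm ▸ hij) (hfin k))
    simpa [p, Ne.symm hne] using addPurchases_of_mem (s := s) (p := p) hk

theorem exists_adj_of_perm (hse : IsStrongEq α s) (hv : Valid s) (hα : α < 2) {ι : Type*}
    [Fintype ι] [Nonempty ι] (σ : Equiv.Perm ι) (hσ : ∀ i, σ (σ i) ≠ i) {f : ι → Fin n}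
    (hf : Injective f) : ∃ i, (NCGraph s).Adj (f i) (f (σ i)) := by
  classical
  by_contra! hna
  set p := extend f (f ∘ σ) id
  have hp : ∀ i, p (f i) = f (σ i) := fun i => hf.extend_apply _ _ i
  have hσne : ∀ i, σ i ≠ i := fun i h => hσ i (by rw [h, h])
  have hpne : ∀ k ∈ univ.image f, p k ≠ k := by
    rintro _ hk
    obtain ⟨i, -, rfl⟩ := mem_image.1 hk
    exact hp i ▸ hf.ne (hσne i)
  obtain ⟨k, hk, hle⟩ := hse.exists_cost_le_addPurchases hv (univ_nonempty.image f) hpne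
  obtain ⟨i, -, rfl⟩ := mem_image.1 hk
  set s' := addPurchases s (univ.image f) p with hs'
  have hbuy : ∀ j, f (σ j) ∈ s' (f j) := fun j => by
    rw [hs', addPurchases_of_mem (mem_image_of_mem f (mem_univ j)), hp]
    exact mem_insert_self _ _
  have hv' : Valid s' := valid_addPurchases hv hpne
  have hnext := ncGraph_adj_of_mem hv' (hbuy i)
  have hprev : (NCGraph s').Adj (f i) (f (σ.symm i)) := by
    simpa using (ncGraph_adj_of_mem hv' (hbuy (σ.symm i))).symm
  have hprev' : ¬(NCGraph s).Adj (f i) (f (σ.symm i)) := by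
    simpa [adj_comm] using hna (σ.symm i)
  have hne : f (σ i) ≠ f (σ.symm i) :=
    hf.ne fun h => hσ (σ.symm i) (by rwa [Equiv.apply_symm_apply])
  exact hle.not_gt (cost_lt_of_insert_of_adj_of_adj hα (ncGraph_mono subset_addPurchases)
    (addPurchases_of_mem hk) hne hnext hprev (hna i) hprev' ((hse.isNashEq hv).dCost_ne_top _))

theorem isAcyclic_compl (hse : IsStrongEq α s) (hv : Valid s) (hα : α < 2) :
    (NCGraph s)ᶜ.IsAcyclic := by
  rw [isAcyclic_iff_free_cycleGraph]
  rintro L hL ⟨f⟩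
  obtain ⟨m, rfl⟩ := Nat.exists_eq_add_of_le' hL
  have hrot : ∀ i : Fin (m + 3), finRotate _ (finRotate _ i) ≠ i := by
    intro i
    simp only [finRotate_apply, Ne, Fin.ext_iff, Fin.val_add_one, Fin.val_last]
    split_ifs <;> omega
  obtain ⟨i, hi⟩ := hse.exists_adj_of_perm hv hα _ hrot f.injective
  refine ((compl_adj _ _ _).1 (f.toHom.map_adj ?_)).2 hi
  rw [finRotate_apply, cycleGraph_adj]
  simp

theorem not_adj_of_mem_of_mem (hse : IsStrongEq α s) (hv : Valid s) (hα₁ : 1 < α) (hα₂ : α < 2)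
    {a b c : Fin n} (hab : b ∈ s a) (hbc : c ∈ s b) : ¬(NCGraph s).Adj a c := by
  intro hac
  have hN := hse.isNashEq hv
  have hdiam := hse.edist_le_two hv hα₂
  have hab' := ncGraph_adj_of_mem hv hab
  have hbc' := ncGraph_adj_of_mem hv hbc
  obtain ⟨x, hax, hbx, hx⟩ := hN.exists_sole_common_neighbor hv hα₁ hdiam hab hac hbc'.symm
  obtain ⟨y, hby, hcy, hy⟩ := hN.exists_sole_common_neighbor hv hα₁ hdiam hbc hab'.symm hac
  have hcx : ¬(NCGraph s).Adj c x := fun h => hbc'.ne (hx c hac h).symm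
  have hay : ¬(NCGraph s).Adj a y := fun h => hac.ne (hy a hab'.symm h)
  have hxy : ¬(NCGraph s).Adj x y := fun h => hax (hy x hbx h ▸ hac)
  have hinj : Injective ![a, x, y] := by
    have hax' := (NCGraph s).ne_of_adj_of_not_adj hac fun h => hcx h.symm
    have hay' := (NCGraph s).ne_of_adj_of_not_adj hab' fun h => hby h.symm
    have hxy' := (NCGraph s).ne_of_adj_of_not_adj hbx.symm fun h => hby h.symm
    simp [Injective, Fin.forall_fin_succ, hax', hay', hxy', hax'.symm, hay'.symm, hxy'.symm]
  obtain ⟨i, hi⟩ := hse.exists_adj_of_perm hv hα₂ (finRotate 3) (by decide) hinj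
  fin_cases i
  exacts [hax hi, hxy hi, hay hi.symm]

theorem cliqueFree_three (hse : IsStrongEq α s) (hv : Valid s) (hα₁ : 1 < α) (hα₂ : α < 2) :
    (NCGraph s).CliqueFree 3 := by
  intro t ht
  obtain ⟨a, b, c, hab, hac, hbc, -⟩ := is3Clique_iff.1 ht
  have key : ∀ {a b c}, (NCGraph s).Adj a c → (NCGraph s).Adj b c → b ∈ s a → False := by
    intro a b c hac hbc hab
    rcases (ncGraph_adj.1 hbc).2 with hbc | hcb
    · exact hse.not_adj_of_mem_of_mem hv hα₁ hα₂ hab hbc hac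
    rcases (ncGraph_adj.1 hac).2 with hac | hca
    · exact hse.not_adj_of_mem_of_mem hv hα₁ hα₂ hac hcb (ncGraph_adj_of_mem hv hab)
    · exact hse.not_adj_of_mem_of_mem hv hα₁ hα₂ hca hab hbc.symm
  rcases (ncGraph_adj.1 hab).2 with h | h
  · exact key hac hbc h
  · exact key hbc hac h

end IsStrongEq

/-- For `α ∈ (1,2)` and `n ≥ 5`, no strong equilibrium exists. -/
theorem stmt9 {n : ℕ} (hn : 5 ≤ n) (α : ℝ) (hα1 : 1 < α) (hα2 : α < 2)
    (s : Profile n) (hv : Valid s) : ¬IsStrongEq α s := by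
  intro hse
  have hcolor : (NCGraph s)ᶜ.Colorable 2 := (hse.isAcyclic_compl hv hα2).colorable_two
  exact not_cliqueFree_of_colorable_compl hcolor (by simpa using (by omega : 2 * 2 < n))
    (hse.cliqueFree_three hv hα1 hα2)
end
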